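/- For all x one has (L^α(x))^{−1} J L^α(x) = J − ½(A^α)² + x A^α and L^α(x) J (L^α(x))^{−1} = J + ½(A^α)² − x A^α. -/
import Mathlib


open Polynomial Matrix MeasureTheory

/-- Physicists' Hermite polynomials `H_n`, with generating function `exp (2xt - t²)`;
equivalently `H_0 = 1`, `H_{n+1}(x) = 2x H_n(x) - H_n'(x)`. -/
noncomputable def physHermite : ℕ → Polynomial ℂ
  | 0 => 1
  | n + 1 => Polynomial.C 2 * Polynomial.X * physHermite n -
      Polynomial.derivative (physHermite n)

/-- The lower triangular matrix `L(x)` with entries `L(x)_{m,n} = H_{m-n}(x)/(m-n)!`. -/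
noncomputable def Lmat (N : ℕ) (z : ℂ) : Matrix (Fin N) (Fin N) ℂ :=
  Matrix.of fun m n =>
    if (n : ℕ) ≤ (m : ℕ) then
      (physHermite ((m : ℕ) - (n : ℕ))).eval z / (Nat.factorial ((m : ℕ) - (n : ℕ)) : ℂ)
    else 0

/-- The matrix `A = 2 ∑_{j=2}^N E_{j,j-1}`. -/
def Amat (N : ℕ) : Matrix (Fin N) (Fin N) ℂ :=
  Matrix.of fun m n => if (m : ℕ) = (n : ℕ) + 1 then 2 else 0

/-- The diagonal matrix `J = diag(1, 2, …, N)`. -/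
def Jmat (N : ℕ) : Matrix (Fin N) (Fin N) ℂ :=
  Matrix.diagonal fun k => ((k : ℕ) + 1 : ℂ)

/-- `S^α = diag(α_1, …, α_N)`. -/
noncomputable def Smat {N : ℕ} (α : Fin N → ℝ) : Matrix (Fin N) (Fin N) ℂ :=
  Matrix.diagonal fun k => (α k : ℂ)

/-- `L^α(x) = S^α L(x) (S^α)⁻¹`. -/
noncomputable def LmatAlpha {N : ℕ} (α : Fin N → ℝ) (x : ℝ) : Matrix (Fin N) (Fin N) ℂ :=
  Smat α * Lmat N (x : ℂ) * (Smat α)⁻¹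

/-- `A^α = S^α A (S^α)⁻¹`. -/
noncomputable def AmatAlpha {N : ℕ} (α : Fin N → ℝ) : Matrix (Fin N) (Fin N) ℂ :=
  Smat α * Amat N * (Smat α)⁻¹

/-- The weight `W^{(α,ν)}(x) = e^{-x²} L^α(x) Δ (L^α(x))^*` where `Δ = diag(δ_1, …, δ_N)`. -/
noncomputable def Wmat {N : ℕ} (α : Fin N → ℝ) (δ : Fin N → ℝ) (x : ℝ) :
    Matrix (Fin N) (Fin N) ℂ :=
  (Real.exp (-x ^ 2) : ℂ) •
    (LmatAlpha α x * Matrix.diagonal (fun k => (δ k : ℂ)) * (LmatAlpha α x)ᴴ)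

/-- Evaluation of a matrix-valued polynomial at a real point. -/
noncomputable def evalM {N : ℕ} (P : Polynomial (Matrix (Fin N) (Fin N) ℂ)) (x : ℝ) :
    Matrix (Fin N) (Fin N) ℂ :=
  Polynomial.eval ((x : ℂ) • (1 : Matrix (Fin N) (Fin N) ℂ)) P

/-- Entrywise integral over `ℝ` (Lebesgue measure) of a matrix-valued function. -/
noncomputable def mInt {N : ℕ} (f : ℝ → Matrix (Fin N) (Fin N) ℂ) :
    Matrix (Fin N) (Fin N) ℂ :=
  Matrix.of fun i j => ∫ x : ℝ, f x i j

/-- Rising factorial (Pochhammer symbol) `(a)_k = a (a+1) ⋯ (a+k-1)`. -/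
noncomputable def risingFactorial (a : ℂ) (k : ℕ) : ℂ :=
  ∏ i ∈ Finset.range k, (a + i)

/-- `P` is the monic matrix-valued orthogonal polynomial of degree `n`
for the weight `Wf`: it is monic of degree `n` and `∫ P(x) Wf(x) xᵖ dx = 0` for `p < n`. -/
def IsMonicOrthPoly {N : ℕ} (Wf : ℝ → Matrix (Fin N) (Fin N) ℂ) (n : ℕ)
    (P : Polynomial (Matrix (Fin N) (Fin N) ℂ)) : Prop :=
  P.Monic ∧ P.natDegree = n ∧
    ∀ p < n, mInt (fun x => (x : ℂ) ^ p • (evalM P x * Wf x)) = 0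

lemma physHermite_succ (n : ℕ) : physHermite (n+1) =
    Polynomial.C 2 * Polynomial.X * physHermite n -
      Polynomial.derivative (physHermite n) := rfl

lemma hermite_deriv (n : ℕ) : derivative (physHermite (n+1)) =
    C (2*((n:ℂ)+1)) * physHermite n := by
  induction n with
  | zero => simp [physHermite]
  | succ k ihk =>
    have hC : C (2*((k:ℂ)+1+1)) = C 2 + C (2*((k:ℂ)+1)) := by
      rw [← C_add]; ring_nf
    rw [physHermite_succ (k+1), ihk]
    simp only [derivative_sub, derivative_mul, derivative_C, derivative_X]
    rw [ihk]
    push_cast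
    rw [hC, physHermite_succ k]
    ring

noncomputable def hv (z : ℂ) (k : ℕ) : ℂ := (physHermite k).eval z / (Nat.factorial k : ℂ)

lemma hv_zero (z : ℂ) : hv z 0 = 1 := by simp [hv, physHermite]

lemma hv_one (z : ℂ) : hv z 1 = 2 * z := by
  simp [hv, physHermite_succ, physHermite]

lemma hv_rec (z : ℂ) (j : ℕ) :
    ((j:ℂ)+2) * hv z (j+2) = 2*z*hv z (j+1) - 2*hv z j := by
  have hrec : physHermite (j+2) = C 2 * X * physHermite (j+1)
      - C (2*((j:ℂ)+1)) * physHermite j := by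
    rw [physHermite_succ (j+1), hermite_deriv j]
  have f2 : ((j+2).factorial : ℂ) = ((j:ℂ)+2) * ((j+1).factorial : ℂ) := by
    rw [Nat.factorial_succ]; push_cast; ring
  have f1 : ((j+1).factorial : ℂ) = ((j:ℂ)+1) * ((j).factorial : ℂ) := by
    rw [Nat.factorial_succ]; push_cast; ring
  have h0 : ((j).factorial : ℂ) ≠ 0 := Nat.cast_ne_zero.2 (Nat.factorial_ne_zero _)
  have hj2 : ((j:ℂ)+2) ≠ 0 := by
    have h := (Nat.cast_ne_zero (R := ℂ)).2 (by omega : j+2 ≠ 0)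
    push_cast at h; exact h
  have hj1 : ((j:ℂ)+1) ≠ 0 := by
    have h := (Nat.cast_ne_zero (R := ℂ)).2 (by omega : j+1 ≠ 0)
    push_cast at h; exact h
  unfold hv
  rw [hrec, f2, f1]
  simp only [eval_sub, eval_mul, eval_C, eval_X]
  field_simp [h0, hj1, hj2]

def sh (N c : ℕ) : Matrix (Fin N) (Fin N) ℂ :=
  Matrix.of fun m n => if (m : ℕ) = (n : ℕ) + c then 1 else 0

lemma Lmat_apply (N : ℕ) (z : ℂ) (m n : Fin N) :
    Lmat N z m n = if (n : ℕ) ≤ (m : ℕ) then hv z ((m:ℕ) - (n:ℕ)) else 0 := rfl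

lemma sh_apply (N c : ℕ) (m n : Fin N) :
    sh N c m n = if (m:ℕ) = (n:ℕ) + c then 1 else 0 := rfl

lemma L_mul_sh (N c : ℕ) (z : ℂ) (m n : Fin N) :
    (Lmat N z * sh N c) m n =
      if (n:ℕ) + c ≤ (m:ℕ) then hv z ((m:ℕ) - (n:ℕ) - c) else 0 := by
  rw [Matrix.mul_apply]
  by_cases h : (n:ℕ) + c ≤ (m:ℕ)
  · have hnc : (n:ℕ) + c < N := lt_of_le_of_lt h m.isLt
    rw [Finset.sum_eq_single (⟨(n:ℕ)+c, hnc⟩ : Fin N)]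
    · rw [Lmat_apply, sh_apply, Fin.val_mk, if_pos h, if_pos rfl, if_pos h, mul_one]
      congr 1; omega
    · intro j _ hj
      have hne : ¬ (j:ℕ) = (n:ℕ) + c := fun he => hj (Fin.ext he)
      rw [sh_apply, if_neg hne, mul_zero]
    · intro hm; exact absurd (Finset.mem_univ _) hm
  · rw [if_neg h]
    apply Finset.sum_eq_zero; intro j _
    by_cases hj : (j:ℕ) = (n:ℕ) + c
    · rw [Lmat_apply, if_neg (by omega), zero_mul]
    · rw [sh_apply, if_neg hj, mul_zero]

lemma sh_mul_L (N c : ℕ) (z : ℂ) (m n : Fin N) :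
    (sh N c * Lmat N z) m n =
      if (n:ℕ) + c ≤ (m:ℕ) then hv z ((m:ℕ) - (n:ℕ) - c) else 0 := by
  rw [Matrix.mul_apply]
  by_cases h : (n:ℕ) + c ≤ (m:ℕ)
  · have hmc : (m:ℕ) - c < N := lt_of_le_of_lt (Nat.sub_le _ _) m.isLt
    rw [Finset.sum_eq_single (⟨(m:ℕ)-c, hmc⟩ : Fin N)]
    · simp only [Lmat_apply, sh_apply, Fin.val_mk]
      rw [if_pos (by omega : (m:ℕ) = (m:ℕ)-c+c),
        if_pos (by omega : (n:ℕ) ≤ (m:ℕ)-c), if_pos h, one_mul]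
      congr 1; omega
    · intro j _ hj
      have hne : ¬ (m:ℕ) = (j:ℕ) + c := fun he =>
        hj (Fin.ext (by simp only [Fin.val_mk]; omega))
      rw [sh_apply, if_neg hne, zero_mul]
    · intro hm; exact absurd (Finset.mem_univ _) hm
  · rw [if_neg h]
    apply Finset.sum_eq_zero; intro j _
    by_cases hj : (m:ℕ) = (j:ℕ) + c
    · rw [Lmat_apply, if_neg (by omega), mul_zero]
    · rw [sh_apply, if_neg hj, zero_mul]

lemma sh_comm_L (N c : ℕ) (z : ℂ) : Lmat N z * sh N c = sh N c * Lmat N z := by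
  ext m n; rw [L_mul_sh, sh_mul_L]

lemma sh_mul_sh (N a b : ℕ) : sh N a * sh N b = sh N (a + b) := by
  ext m n
  rw [Matrix.mul_apply, sh_apply]
  by_cases h : (m:ℕ) = (n:ℕ) + (a + b)
  · have hnb : (n:ℕ) + b < N := lt_of_le_of_lt (by omega) m.isLt
    rw [if_pos h, Finset.sum_eq_single (⟨(n:ℕ)+b, hnb⟩ : Fin N)]
    · rw [sh_apply, sh_apply, Fin.val_mk, if_pos (by omega : (m:ℕ) = (n:ℕ)+b+a),
        if_pos rfl, mul_one]
    · intro j _ hj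
      have hne : ¬ (j:ℕ) = (n:ℕ) + b := fun he => hj (Fin.ext he)
      rw [sh_apply N b, if_neg hne, mul_zero]
    · intro hm; exact absurd (Finset.mem_univ _) hm
  · rw [if_neg h]
    apply Finset.sum_eq_zero; intro j _
    by_cases hj : (j:ℕ) = (n:ℕ) + b
    · rw [sh_apply N a, if_neg (by omega : ¬ (m:ℕ) = (j:ℕ) + a), zero_mul]
    · rw [sh_apply N b, if_neg hj, mul_zero]

lemma Amat_eq (N : ℕ) : Amat N = (2:ℂ) • sh N 1 := by
  ext m n
  by_cases h : (m:ℕ) = (n:ℕ) + 1 <;> simp [Amat, sh, h]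

lemma Amat_sq (N : ℕ) : Amat N ^ 2 = (4:ℂ) • sh N 2 := by
  rw [sq, Amat_eq, smul_mul_smul_comm, sh_mul_sh]
  norm_num

lemma keyL (N : ℕ) (z : ℂ) : Jmat N * Lmat N z =
    Lmat N z * (Jmat N - (1/2:ℂ) • Amat N ^ 2 + z • Amat N) := by
  rw [Amat_sq, Amat_eq, smul_smul, smul_smul]
  norm_num
  rw [mul_add, mul_sub, Matrix.mul_smul, Matrix.mul_smul, Jmat]
  ext m n
  simp only [Matrix.add_apply, Matrix.sub_apply, Matrix.smul_apply, smul_eq_mul,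
    Matrix.diagonal_mul, Matrix.mul_diagonal, L_mul_sh, Lmat_apply]
  by_cases h : (n:ℕ) ≤ (m:ℕ)
  · rw [if_pos h]
    obtain ⟨k, hk⟩ : ∃ k, (m:ℕ) = (n:ℕ) + k := ⟨(m:ℕ) - (n:ℕ), by omega⟩
    match k, hk with
    | 0, hk =>
      rw [if_neg (show ¬((n:ℕ)+2 ≤ (m:ℕ)) by omega),
        if_neg (show ¬((n:ℕ)+1 ≤ (m:ℕ)) by omega), show (m:ℕ) - (n:ℕ) = 0 by omega]
      have hc : ((m:ℕ):ℂ) = ((n:ℕ):ℂ) := by exact_mod_cast congrArg Nat.cast hk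
      rw [hc, hv_zero]; ring
    | 1, hk =>
      rw [if_pos (show (n:ℕ)+1 ≤ (m:ℕ) by omega),
        if_neg (show ¬((n:ℕ)+2 ≤ (m:ℕ)) by omega), show (m:ℕ) - (n:ℕ) - 1 = 0 by omega,
        show (m:ℕ) - (n:ℕ) = 1 by omega]
      have hc : ((m:ℕ):ℂ) = ((n:ℕ):ℂ) + 1 := by exact_mod_cast congrArg Nat.cast hk
      rw [hc, hv_zero, hv_one]; ring
    | (j+2), hk =>
      rw [if_pos (show (n:ℕ)+1 ≤ (m:ℕ) by omega), if_pos (show (n:ℕ)+2 ≤ (m:ℕ) by omega),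
        show (m:ℕ) - (n:ℕ) - 1 = j + 1 by omega, show (m:ℕ) - (n:ℕ) - 2 = j by omega,
        show (m:ℕ) - (n:ℕ) = j + 2 by omega]
      have hc : ((m:ℕ):ℂ) = ((n:ℕ):ℂ) + ((j:ℂ) + 2) := by
        have := congrArg (Nat.cast (R := ℂ)) hk; push_cast at this; rw [this]
      rw [hc]
      linear_combination hv_rec z j
  · rw [if_neg h, if_neg (show ¬((n:ℕ)+2 ≤ (m:ℕ)) by omega),
      if_neg (show ¬((n:ℕ)+1 ≤ (m:ℕ)) by omega)]; ring

lemma A_comm_L (N : ℕ) (z : ℂ) : Amat N * Lmat N z = Lmat N z * Amat N := by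
  rw [Amat_eq, smul_mul_assoc, Matrix.mul_smul, sh_comm_L]

lemma key2L (N : ℕ) (z : ℂ) :
    (Jmat N + (1/2:ℂ) • Amat N ^ 2 - z • Amat N) * Lmat N z = Lmat N z * Jmat N := by
  have hA2 : Amat N ^ 2 * Lmat N z = Lmat N z * Amat N ^ 2 := by
    rw [sq, Matrix.mul_assoc, A_comm_L, ← Matrix.mul_assoc, A_comm_L, Matrix.mul_assoc]
  rw [sub_mul, add_mul, smul_mul_assoc, smul_mul_assoc, keyL, hA2, A_comm_L,
    mul_add, mul_sub, Matrix.mul_smul, Matrix.mul_smul]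
  abel

lemma Lmat_det (N : ℕ) (z : ℂ) : (Lmat N z).det = 1 := by
  have hbt : (Lmat N z).BlockTriangular OrderDual.toDual := by
    intro i j hij
    have hij' : (i:ℕ) < (j:ℕ) := hij
    rw [Lmat_apply, if_neg (by omega)]
  rw [Matrix.det_of_lowerTriangular _ hbt]
  have hd : ∀ i : Fin N, Lmat N z i i = 1 := fun i => by
    rw [Lmat_apply, if_pos le_rfl, Nat.sub_self, hv_zero]
  simp [hd]

/-- Lemma 3.3: `(L^α(x))⁻¹ J L^α(x) = J - ½(A^α)² + x A^α` and
`L^α(x) J (L^α(x))⁻¹ = J + ½(A^α)² - x A^α`. -/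
theorem stmt_4 (N : ℕ) (hN : 0 < N) (α : Fin N → ℝ) (hα : ∀ k, α k ≠ 0)
    (hα1 : α ⟨0, hN⟩ = 1) (x : ℝ) :
    (LmatAlpha α x)⁻¹ * Jmat N * LmatAlpha α x =
      Jmat N - (1 / 2 : ℂ) • AmatAlpha α ^ 2 + (x : ℂ) • AmatAlpha α ∧
    LmatAlpha α x * Jmat N * (LmatAlpha α x)⁻¹ =
      Jmat N + (1 / 2 : ℂ) • AmatAlpha α ^ 2 - (x : ℂ) • AmatAlpha α := by
  have hSdet : IsUnit (Smat α).det := by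
    rw [Smat, Matrix.det_diagonal]
    exact (Finset.prod_ne_zero_iff.2 fun k _ => by
      exact_mod_cast Complex.ofReal_ne_zero.2 (hα k)).isUnit
  have hSS : Smat α * (Smat α)⁻¹ = 1 := Matrix.mul_nonsing_inv _ hSdet
  have hSS' : (Smat α)⁻¹ * Smat α = 1 := Matrix.nonsing_inv_mul _ hSdet
  have hJS : Jmat N * Smat α = Smat α * Jmat N := by
    ext i j
    rw [Jmat, Smat, Matrix.diagonal_mul_diagonal, Matrix.diagonal_mul_diagonal,
      Matrix.diagonal_apply, Matrix.diagonal_apply]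
    split <;> ring
  have hJS' : Jmat N * (Smat α)⁻¹ = (Smat α)⁻¹ * Jmat N := by
    ext i j
    rw [Smat, Matrix.inv_diagonal, Jmat, Matrix.diagonal_mul_diagonal,
      Matrix.diagonal_mul_diagonal, Matrix.diagonal_apply, Matrix.diagonal_apply]
    split <;> ring
  have hSJS : Smat α * Jmat N * (Smat α)⁻¹ = Jmat N := by
    rw [← hJS, Matrix.mul_assoc, hSS, Matrix.mul_one]
  have hAα2 : AmatAlpha α ^ 2 = Smat α * Amat N ^ 2 * (Smat α)⁻¹ := by
    rw [sq, sq, AmatAlpha]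
    simp only [Matrix.mul_assoc]
    rw [← Matrix.mul_assoc (Smat α)⁻¹ (Smat α), hSS', Matrix.one_mul]
  have hconj : ∀ z : ℂ,
      Jmat N - (1/2:ℂ) • AmatAlpha α ^ 2 + z • AmatAlpha α =
        Smat α * (Jmat N - (1/2:ℂ) • Amat N ^ 2 + z • Amat N) * (Smat α)⁻¹ := by
    intro z
    rw [hAα2, AmatAlpha, mul_add, add_mul, mul_sub, sub_mul, Matrix.mul_smul,
      Matrix.mul_smul, Matrix.smul_mul, Matrix.smul_mul, hSJS]
  have hconj2 : ∀ z : ℂ,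
      Jmat N + (1/2:ℂ) • AmatAlpha α ^ 2 - z • AmatAlpha α =
        Smat α * (Jmat N + (1/2:ℂ) • Amat N ^ 2 - z • Amat N) * (Smat α)⁻¹ := by
    intro z
    rw [hAα2, AmatAlpha, mul_sub, sub_mul, mul_add, add_mul, Matrix.mul_smul,
      Matrix.mul_smul, Matrix.smul_mul, Matrix.smul_mul, hSJS]
  have keyA : Jmat N * LmatAlpha α x =
      LmatAlpha α x * (Jmat N - (1/2:ℂ) • AmatAlpha α ^ 2 + (x:ℂ) • AmatAlpha α) := by
    rw [hconj, LmatAlpha]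
    calc Jmat N * (Smat α * Lmat N (x:ℂ) * (Smat α)⁻¹)
        = Smat α * (Jmat N * Lmat N (x:ℂ)) * (Smat α)⁻¹ := by
          rw [← Matrix.mul_assoc, ← Matrix.mul_assoc, hJS,
            Matrix.mul_assoc (Smat α) (Jmat N) (Lmat N (x:ℂ))]
      _ = Smat α * Lmat N (x:ℂ) * ((Smat α)⁻¹ * Smat α) *
            (Jmat N - (1/2:ℂ) • Amat N ^ 2 + (x:ℂ) • Amat N) * (Smat α)⁻¹ := by
          rw [keyL, hSS', Matrix.mul_one]
          simp only [Matrix.mul_assoc]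
      _ = Smat α * Lmat N (x:ℂ) * (Smat α)⁻¹ *
            (Smat α * (Jmat N - (1/2:ℂ) • Amat N ^ 2 + (x:ℂ) • Amat N) * (Smat α)⁻¹) := by
          simp only [Matrix.mul_assoc]
  have key2A : (Jmat N + (1/2:ℂ) • AmatAlpha α ^ 2 - (x:ℂ) • AmatAlpha α) *
      LmatAlpha α x = LmatAlpha α x * Jmat N := by
    rw [hconj2, LmatAlpha]
    calc Smat α * (Jmat N + (1/2:ℂ) • Amat N ^ 2 - (x:ℂ) • Amat N) * (Smat α)⁻¹ *
          (Smat α * Lmat N (x:ℂ) * (Smat α)⁻¹)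
        = Smat α * ((Jmat N + (1/2:ℂ) • Amat N ^ 2 - (x:ℂ) • Amat N) *
            ((Smat α)⁻¹ * Smat α) * Lmat N (x:ℂ)) * (Smat α)⁻¹ := by
          simp only [Matrix.mul_assoc]
      _ = Smat α * (Lmat N (x:ℂ) * Jmat N) * (Smat α)⁻¹ := by
          rw [hSS', Matrix.mul_one, key2L]
      _ = Smat α * Lmat N (x:ℂ) * (Smat α)⁻¹ * Jmat N := by
          simp only [Matrix.mul_assoc]; rw [hJS']
  have hLdet : IsUnit (LmatAlpha α x).det := by
    rw [LmatAlpha, Matrix.det_mul, Matrix.det_mul, Lmat_det, mul_one,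
      Matrix.det_nonsing_inv]
    rw [Ring.mul_inverse_cancel _ hSdet]; exact isUnit_one
  constructor
  · rw [Matrix.mul_assoc, keyA, ← Matrix.mul_assoc,
      Matrix.nonsing_inv_mul _ hLdet, Matrix.one_mul]
  · rw [← key2A, Matrix.mul_assoc, Matrix.mul_nonsing_inv _ hLdet, Matrix.mul_one]
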